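/- Suppose p : [0,∞) → [0,∞) is measurable, bounded on compact sets, and s·(log s)·p(s) → f as s → ∞ for some constant f > 0. Then (1/log(log N))·∫_0^∞ e^{-s/N}·p(s) ds → f as N → ∞. -/

import Mathlib

/-!
Write `g s = (s log s)⁻¹`, whose antiderivative is `log (log s)`. Its Laplace transform
`J N = ∫_{s > 2} e^{-s/N} g s ds` is asymptotic to `log (log N)`: from above, bound `e^{-s/N}` by
`1` up to `N` and `g s` by `g N` beyond; from below, keep only `2 < s ≤ √N`, where
`e^{-s/N} ≥ e^{-1/√N} → 1` and `log (log √N) = log (log N) - log 2`.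

Since `p - f g = o(g)` at infinity and `J N → ∞`, the Laplace transform of `p - f g` is `o(J)`:
beyond a point where `|p - f g| ≤ ε g` it contributes at most `ε J N`, and before it a constant.
The integral over `(0, 2]` is bounded as well, so `∫_{s > 0} e^{-s/N} p s ds = f J N + o(J N)`.
-/

open MeasureTheory Set Filter Real Asymptotics Topology

lemma exp_neg_div_le_one {N s : ℝ} (hN : 0 < N) (hs : 0 ≤ s) : exp (-s / N) ≤ 1 :=
  exp_le_one_iff.2 (div_nonpos_of_nonpos_of_nonneg (neg_nonpos.2 hs) hN.le)

lemma integral_exp_neg_div_Ioi {N : ℝ} (hN : 0 < N) (c : ℝ) :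
    ∫ s in Ioi c, exp (-s / N) = N * exp (-c / N) := by
  have h := integral_exp_mul_Ioi (neg_lt_zero.2 (inv_pos.2 hN)) c
  simp only [neg_mul, ← neg_div, inv_mul_eq_div] at h
  rw [h]
  field_simp

lemma integrableOn_exp_neg_div_Ioi {N : ℝ} (hN : 0 < N) (c : ℝ) :
    IntegrableOn (fun s => exp (-s / N)) (Ioi c) := by
  simpa [neg_div, div_eq_inv_mul] using exp_neg_integrableOn_Ioi c (inv_pos.2 hN)

lemma tendsto_log_log_atTop : Tendsto (fun N => log (log N)) atTop atTop :=
  tendsto_log_atTop.comp tendsto_log_atTop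

section LogLogWeight

variable {a : ℝ}

lemma mul_log_le_mul_log (ha : 1 < a) {s : ℝ} (hs : a ≤ s) : a * log a ≤ s * log s := by
  have := log_le_log (by linarith) hs
  have := log_pos ha
  nlinarith

lemma hasDerivAt_log_log {s : ℝ} (hs : 1 < s) :
    HasDerivAt (fun s => log (log s)) (s * log s)⁻¹ s := by
  have := ((hasDerivAt_log (by linarith)).log (log_pos hs).ne')
  convert this using 1
  field_simp

lemma continuousOn_inv_mul_log (ha : 1 < a) : ContinuousOn (fun s => (s * log s)⁻¹) (Ici a) := by
  refine ContinuousOn.inv₀ (continuousOn_id.mul (continuousOn_log.mono ?_)) fun s hs => ?_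
  · intro s hs; simp only [mem_compl_iff, mem_singleton_iff]; linarith [mem_Ici.1 hs]
  · have := ha.trans_le hs
    have := log_pos this
    positivity

lemma integrableOn_inv_mul_log (ha : 1 < a) (b : ℝ) :
    IntegrableOn (fun s => (s * log s)⁻¹) (Ioc a b) :=
  ((continuousOn_inv_mul_log ha).mono Icc_subset_Ici_self).integrableOn_Icc.mono_set
    Ioc_subset_Icc_self

lemma integral_inv_mul_log {b : ℝ} (ha : 1 < a) (hab : a ≤ b) :
    ∫ s in Ioc a b, (s * log s)⁻¹ = log (log b) - log (log a) := by
  rw [← intervalIntegral.integral_of_le hab]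
  refine intervalIntegral.integral_eq_sub_of_hasDerivAt
    (fun s hs => hasDerivAt_log_log ?_) (ContinuousOn.intervalIntegrable ?_)
  · rw [uIcc_of_le hab] at hs; linarith [hs.1]
  · rw [uIcc_of_le hab]
    exact (continuousOn_inv_mul_log ha).mono Icc_subset_Ici_self

lemma inv_mul_log_le (ha : 1 < a) {s : ℝ} (hs : a ≤ s) :
    (s * log s)⁻¹ ≤ (a * log a)⁻¹ :=
  inv_anti₀ (mul_pos (by linarith) (log_pos ha)) (mul_log_le_mul_log ha hs)

lemma integrableOn_exp_mul_inv_mul_log (ha : 1 < a) {N : ℝ} (hN : 0 < N) :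
    IntegrableOn (fun s => exp (-s / N) * (s * log s)⁻¹) (Ioi a) := by
  refine (integrableOn_exp_neg_div_Ioi hN a).mul_bdd (c := (a * log a)⁻¹) ?_ ?_
  · exact (measurable_id.mul measurable_log).inv.aestronglyMeasurable
  · refine (ae_restrict_mem measurableSet_Ioi).mono fun s hs => ?_
    have := log_pos (ha.trans hs)
    have := ha.trans hs
    rw [norm_of_nonneg (by positivity)]
    exact inv_mul_log_le ha hs.le

lemma setIntegral_exp_mul_inv_mul_log_le (ha : 1 < a) {N : ℝ} (hN : a ≤ N) :
    ∫ s in Ioi a, exp (-s / N) * (s * log s)⁻¹ ≤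
      log (log N) - log (log a) + (log N)⁻¹ := by
  have hN0 : 0 < N := by linarith
  have hlogN : 0 < log N := log_pos (by linarith)
  have hint := integrableOn_exp_mul_inv_mul_log ha hN0
  rw [← Ioc_union_Ioi_eq_Ioi hN, setIntegral_union Ioc_disjoint_Ioi_same measurableSet_Ioi
    (hint.mono_set Ioc_subset_Ioi_self) (hint.mono_set (Ioi_subset_Ioi hN))]
  have hpos : ∀ s ∈ Ioi a, 0 < s * log s := fun s hs =>
    mul_pos (by linarith [mem_Ioi.1 hs]) (log_pos (ha.trans hs))
  have hnear : ∫ s in Ioc a N, exp (-s / N) * (s * log s)⁻¹ ≤ log (log N) - log (log a) := by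
    rw [← integral_inv_mul_log ha hN]
    refine setIntegral_mono_on (hint.mono_set Ioc_subset_Ioi_self)
      (integrableOn_inv_mul_log ha N) measurableSet_Ioc fun s hs => ?_
    have := hpos s hs.1
    exact mul_le_of_le_one_left (by positivity) (exp_neg_div_le_one hN0 (by linarith [hs.1]))
  have hfar : ∫ s in Ioi N, exp (-s / N) * (s * log s)⁻¹ ≤ (log N)⁻¹ := by
    calc ∫ s in Ioi N, exp (-s / N) * (s * log s)⁻¹
        ≤ ∫ s in Ioi N, (N * log N)⁻¹ * exp (-s / N) := by
          refine setIntegral_mono_on (hint.mono_set (Ioi_subset_Ioi hN))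
            ((integrableOn_exp_neg_div_Ioi hN0 N).const_mul _) measurableSet_Ioi fun s hs => ?_
          rw [mul_comm]
          exact mul_le_mul_of_nonneg_right (inv_mul_log_le (ha.trans_le hN) (le_of_lt hs))
            (exp_pos _).le
      _ = exp (-1) * (log N)⁻¹ := by
          rw [integral_const_mul, integral_exp_neg_div_Ioi hN0, neg_div, div_self hN0.ne']
          field_simp
      _ ≤ (log N)⁻¹ := mul_le_of_le_one_left (by positivity) (exp_le_one_iff.2 (by norm_num))
  linarith

lemma le_setIntegral_exp_mul_inv_mul_log (ha : 1 < a) {N : ℝ} (hN : a ^ 2 ≤ N) :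
    exp (-(√N)⁻¹) * (log (log N) - log 2 - log (log a)) ≤
      ∫ s in Ioi a, exp (-s / N) * (s * log s)⁻¹ := by
  have hN0 : 0 < N := by nlinarith
  have haN : a ≤ √N := le_sqrt_of_sq_le hN
  have hsqrt : 0 < √N := by linarith
  have hint := integrableOn_exp_mul_inv_mul_log ha hN0
  have hloglog : log (log √N) = log (log N) - log 2 := by
    have : 0 < log N := log_pos (by nlinarith)
    rw [log_sqrt hN0.le, log_div this.ne' two_ne_zero]
  calc exp (-(√N)⁻¹) * (log (log N) - log 2 - log (log a))
      = ∫ s in Ioc a √N, exp (-(√N)⁻¹) * (s * log s)⁻¹ := by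
        rw [integral_const_mul, integral_inv_mul_log ha haN, hloglog, sub_sub]
    _ ≤ ∫ s in Ioc a √N, exp (-s / N) * (s * log s)⁻¹ := by
        refine setIntegral_mono_on ((integrableOn_inv_mul_log ha _).const_mul _)
          (hint.mono_set Ioc_subset_Ioi_self) measurableSet_Ioc fun s ⟨has, hsN⟩ => ?_
        have hlog : 0 < s * log s := mul_pos (by linarith) (log_pos (ha.trans has))
        refine mul_le_mul_of_nonneg_right (exp_le_exp.2 ?_) (inv_pos.2 hlog).le
        rwa [neg_div, neg_le_neg_iff, div_le_iff₀ hN0, inv_mul_eq_div,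
          div_eq_of_eq_mul hsqrt.ne' (mul_self_sqrt hN0.le).symm]
    _ ≤ ∫ s in Ioi a, exp (-s / N) * (s * log s)⁻¹ := by
        refine setIntegral_mono_set hint (ae_restrict_of_forall_mem measurableSet_Ioi
          fun s hs => ?_) Ioc_subset_Ioi_self.eventuallyLE
        have := ha.trans (mem_Ioi.1 hs)
        have := log_pos this
        positivity

theorem setIntegral_exp_mul_inv_mul_log_isEquivalent (ha : 1 < a) :
    (fun N => ∫ s in Ioi a, exp (-s / N) * (s * log s)⁻¹) ~[atTop] fun N => log (log N) := by
  refine isEquivalent_of_tendsto_one ?_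
  have hlower : Tendsto (fun N => exp (-(√N)⁻¹) * (1 - (log 2 + log (log a)) / log (log N)))
      atTop (𝓝 1) := by
    have hexp : Tendsto (fun N => exp (-(√N)⁻¹)) atTop (𝓝 1) := by
      simpa [Function.comp_def] using (continuous_exp.tendsto _).comp
        (tendsto_inv_atTop_zero.comp tendsto_sqrt_atTop).neg
    simpa using hexp.mul (tendsto_const_nhds.sub
      (tendsto_const_nhds.div_atTop tendsto_log_log_atTop))
  have hupper : Tendsto (fun N => 1 + (-log (log a) + (log N)⁻¹) / log (log N))
      atTop (𝓝 1) := by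
    simpa using tendsto_const_nhds.add ((tendsto_const_nhds.add
      (tendsto_inv_atTop_zero.comp tendsto_log_atTop)).div_atTop tendsto_log_log_atTop)
  refine tendsto_of_tendsto_of_tendsto_of_le_of_le' hlower hupper ?_ ?_ <;>
    filter_upwards [eventually_ge_atTop (a ^ 2), eventually_gt_atTop (exp 1)] with N haN heN <;>
    have hL : 0 < log (log N) := log_pos (by rwa [lt_log_iff_exp_lt ((exp_pos 1).trans heN)])
  · rw [Pi.div_apply, le_div_iff₀ hL]
    exact le_of_eq_of_le (by field_simp; ring) (le_setIntegral_exp_mul_inv_mul_log ha haN)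
  · rw [Pi.div_apply, div_le_iff₀ hL]
    exact (setIntegral_exp_mul_inv_mul_log_le ha (by nlinarith)).trans_eq (by field_simp; ring)

end LogLogWeight

section Abelian

variable {a : ℝ} {g h : ℝ → ℝ}

lemma norm_exp_mul_le {N s c : ℝ} (hgs : 0 ≤ g s) (hs : ‖h s‖ ≤ c * ‖g s‖) :
    ‖exp (-s / N) * h s‖ ≤ c * (exp (-s / N) * g s) := by
  rw [norm_of_nonneg hgs] at hs
  rw [norm_mul, norm_of_nonneg (exp_pos _).le, mul_left_comm]
  exact mul_le_mul_of_nonneg_left hs (exp_pos _).le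

lemma norm_exp_mul_le_norm {N s : ℝ} (hN : 0 < N) (hs : 0 ≤ s) :
    ‖exp (-s / N) * h s‖ ≤ ‖h s‖ := by
  rw [norm_mul, norm_of_nonneg (exp_pos _).le]
  exact mul_le_of_le_one_left (norm_nonneg _) (exp_neg_div_le_one hN hs)

lemma norm_setIntegral_Ioc_exp_mul_le {b N : ℝ} (ha : 0 ≤ a) (hN : 0 < N)
    (hh : IntegrableOn h (Ioc a b)) :
    ‖∫ s in Ioc a b, exp (-s / N) * h s‖ ≤ ∫ s in Ioc a b, ‖h s‖ :=
  norm_integral_le_of_norm_le hh.norm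
    (ae_restrict_of_forall_mem measurableSet_Ioc fun _ hs =>
      norm_exp_mul_le_norm hN (ha.trans hs.1.le))

lemma isBigO_one_setIntegral_Ioc_exp_mul {b : ℝ} (ha : 0 ≤ a) (hh : IntegrableOn h (Ioc a b)) :
    (fun N => ∫ s in Ioc a b, exp (-s / N) * h s) =O[atTop] fun _ => (1 : ℝ) := by
  refine IsBigO.of_bound (∫ s in Ioc a b, ‖h s‖) ?_
  filter_upwards [eventually_gt_atTop 0] with N hN
  simpa using norm_setIntegral_Ioc_exp_mul_le ha hN hh

lemma integrableOn_Ioc_exp_mul {b N : ℝ} (ha : 0 ≤ a) (hN : 0 < N)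
    (hh : IntegrableOn h (Ioc a b)) : IntegrableOn (fun s => exp (-s / N) * h s) (Ioc a b) :=
  Integrable.bdd_mul hh (by fun_prop) (ae_restrict_of_forall_mem measurableSet_Ioc fun s hs => by
    rw [norm_of_nonneg (exp_pos _).le]
    exact exp_neg_div_le_one hN (ha.trans hs.1.le))

lemma integrableOn_Ioi_exp_mul_of_isBigO {N : ℝ} (ha : 0 ≤ a) (hN : 0 < N)
    (hg : ∀ s ∈ Ioi a, 0 ≤ g s) (hgi : IntegrableOn (fun s => exp (-s / N) * g s) (Ioi a))
    (hh : Measurable h) (hloc : ∀ b, IntegrableOn h (Ioc a b)) (hhg : h =O[atTop] g) :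
    IntegrableOn (fun s => exp (-s / N) * h s) (Ioi a) := by
  obtain ⟨c, hc⟩ := hhg.bound
  obtain ⟨b, hb⟩ := eventually_atTop.1 (hc.and (eventually_ge_atTop a))
  have hab : a ≤ b := (hb b le_rfl).2
  have hfar : IntegrableOn (fun s => exp (-s / N) * h s) (Ioi b) :=
    Integrable.mono' ((hgi.mono_set (Ioi_subset_Ioi hab)).const_mul c) (by fun_prop)
      (ae_restrict_of_forall_mem measurableSet_Ioi fun s hs =>
        norm_exp_mul_le (hg s (hab.trans_lt hs)) (hb s (le_of_lt hs)).1)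
  rw [← Ioc_union_Ioi_eq_Ioi hab]
  exact (integrableOn_Ioc_exp_mul ha hN (hloc b)).union hfar

theorem isLittleO_setIntegral_exp_mul (ha : 0 ≤ a) (hg : ∀ s ∈ Ioi a, 0 ≤ g s)
    (hgi : ∀ N, 0 < N → IntegrableOn (fun s => exp (-s / N) * g s) (Ioi a))
    (hJ : Tendsto (fun N => ∫ s in Ioi a, exp (-s / N) * g s) atTop atTop)
    (hh : Measurable h) (hloc : ∀ b, IntegrableOn h (Ioc a b)) (hhg : h =o[atTop] g) :
    (fun N => ∫ s in Ioi a, exp (-s / N) * h s) =o[atTop]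
      fun N => ∫ s in Ioi a, exp (-s / N) * g s := by
  refine IsLittleO.of_bound fun ε hε => ?_
  obtain ⟨b, hb⟩ := eventually_atTop.1 ((hhg.bound (half_pos hε)).and (eventually_ge_atTop a))
  have hab : a ≤ b := (hb b le_rfl).2
  set K := ∫ s in Ioc a b, ‖h s‖
  filter_upwards [hJ.eventually_ge_atTop (2 * K / ε), eventually_gt_atTop 0] with N hJN hN
  have hint := integrableOn_Ioi_exp_mul_of_isBigO ha hN hg (hgi N hN) hh hloc hhg.isBigO
  have hsplit : ∫ s in Ioi a, exp (-s / N) * h s =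
      (∫ s in Ioc a b, exp (-s / N) * h s) + ∫ s in Ioi b, exp (-s / N) * h s := by
    rw [← setIntegral_union Ioc_disjoint_Ioi_same measurableSet_Ioi
      (hint.mono_set Ioc_subset_Ioi_self) (hint.mono_set (Ioi_subset_Ioi hab)),
      Ioc_union_Ioi_eq_Ioi hab]
  have hJ0 : 0 ≤ ∫ s in Ioi a, exp (-s / N) * g s :=
    setIntegral_nonneg measurableSet_Ioi fun s hs => mul_nonneg (exp_pos _).le (hg s hs)
  have hnear := norm_setIntegral_Ioc_exp_mul_le ha hN (hloc b)
  have hfar : ‖∫ s in Ioi b, exp (-s / N) * h s‖ ≤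
      ε / 2 * ∫ s in Ioi a, exp (-s / N) * g s := by
    calc ‖∫ s in Ioi b, exp (-s / N) * h s‖
        ≤ ∫ s in Ioi b, ε / 2 * (exp (-s / N) * g s) :=
          norm_integral_le_of_norm_le (((hgi N hN).mono_set (Ioi_subset_Ioi hab)).const_mul _)
            (ae_restrict_of_forall_mem measurableSet_Ioi fun s hs =>
              norm_exp_mul_le (hg s (hab.trans_lt hs)) (hb s (le_of_lt hs)).1)
      _ ≤ ε / 2 * ∫ s in Ioi a, exp (-s / N) * g s := by
          rw [integral_const_mul]
          refine mul_le_mul_of_nonneg_left (setIntegral_mono_set (hgi N hN)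
            (ae_restrict_of_forall_mem measurableSet_Ioi fun s hs => ?_)
            (Ioi_subset_Ioi hab).eventuallyLE) (by positivity)
          exact mul_nonneg (exp_pos _).le (hg s hs)
  rw [div_le_iff₀ hε] at hJN
  rw [hsplit, norm_of_nonneg hJ0]
  linarith [norm_add_le (∫ s in Ioc a b, exp (-s / N) * h s) (∫ s in Ioi b, exp (-s / N) * h s)]

lemma setIntegral_Ioi_exp_mul_sub {p : ℝ → ℝ} {b c N : ℝ} (hba : b ≤ a)
    (hp : IntegrableOn (fun s => exp (-s / N) * p s) (Ioc b a))
    (hpg : IntegrableOn (fun s => exp (-s / N) * (p s - c * g s)) (Ioi a))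
    (hg : IntegrableOn (fun s => exp (-s / N) * g s) (Ioi a)) :
    (∫ s in Ioi b, exp (-s / N) * p s) - c * ∫ s in Ioi a, exp (-s / N) * g s =
      (∫ s in Ioc b a, exp (-s / N) * p s) + ∫ s in Ioi a, exp (-s / N) * (p s - c * g s) := by
  have hpa : IntegrableOn (fun s => exp (-s / N) * p s) (Ioi a) :=
    (hpg.add (hg.const_mul c)).congr_fun (fun s _ => by simp only [Pi.add_apply]; ring)
      measurableSet_Ioi
  rw [← Ioc_union_Ioi_eq_Ioi hba,
    setIntegral_union Ioc_disjoint_Ioi_same measurableSet_Ioi hp hpa, ← integral_const_mul,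
    add_sub_assoc, ← integral_sub hpa (hg.const_mul c)]
  congr 2 with s
  ring

theorem isLittleO_setIntegral_exp_mul_sub {p : ℝ → ℝ} {b c : ℝ} (hb : 0 ≤ b) (hba : b ≤ a)
    (hg : ∀ s ∈ Ioi a, 0 ≤ g s)
    (hgi : ∀ N, 0 < N → IntegrableOn (fun s => exp (-s / N) * g s) (Ioi a))
    (hJ : Tendsto (fun N => ∫ s in Ioi a, exp (-s / N) * g s) atTop atTop)
    (hp : Measurable p) (hgm : Measurable g) (hploc : ∀ x, IntegrableOn p (Ioc b x))
    (hgloc : ∀ x, IntegrableOn g (Ioc a x)) (hpg : (fun s => p s - c * g s) =o[atTop] g) :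
    (fun N => (∫ s in Ioi b, exp (-s / N) * p s) - c * ∫ s in Ioi a, exp (-s / N) * g s) =o[atTop]
      fun N => ∫ s in Ioi a, exp (-s / N) * g s := by
  have hhloc : ∀ x, IntegrableOn (fun s => p s - c * g s) (Ioc a x) := fun x =>
    ((hploc x).mono_set (Ioc_subset_Ioc_left hba)).sub ((hgloc x).const_mul c)
  have hsplit : (fun N => (∫ s in Ioc b a, exp (-s / N) * p s) +
      ∫ s in Ioi a, exp (-s / N) * (p s - c * g s)) =ᶠ[atTop]
      fun N => (∫ s in Ioi b, exp (-s / N) * p s) - c * ∫ s in Ioi a, exp (-s / N) * g s := by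
    filter_upwards [eventually_gt_atTop 0] with N hN
    exact (setIntegral_Ioi_exp_mul_sub hba (integrableOn_Ioc_exp_mul hb hN (hploc a))
      (integrableOn_Ioi_exp_mul_of_isBigO (hb.trans hba) hN hg (hgi N hN) (by fun_prop) hhloc
        hpg.isBigO) (hgi N hN)).symm
  exact (((isBigO_one_setIntegral_Ioc_exp_mul hb (hploc a)).trans_isLittleO
    ((isLittleO_one_left_iff ℝ).2 (tendsto_norm_atTop_atTop.comp hJ))).add
    (isLittleO_setIntegral_exp_mul (hb.trans hba) hg hgi hJ (by fun_prop) hhloc hpg)).congr'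
    hsplit EventuallyEq.rfl

end Abelian

lemma tendsto_div_of_isLittleO_sub_mul {α : Type*} {l : Filter α} {I J L : α → ℝ} {c : ℝ}
    (hJL : J ~[l] L) (hL : ∀ᶠ x in l, L x ≠ 0) (hIJ : (fun x => I x - c * J x) =o[l] J) :
    Tendsto (fun x => I x / L x) l (𝓝 c) := by
  have := (hIJ.trans_isBigO hJL.isBigO).tendsto_div_nhds_zero.add
    (((isEquivalent_iff_tendsto_one hL).1 hJL).const_mul c)
  rw [zero_add, mul_one] at this
  refine this.congr fun x => ?_
  simp only [Pi.div_apply]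
  ring

lemma isLittleO_sub_mul_inv_mul_log {p : ℝ → ℝ} {f : ℝ}
    (hlim : Tendsto (fun s => s * log s * p s) atTop (𝓝 f)) :
    (fun s => p s - f * (s * log s)⁻¹) =o[atTop] fun s => (s * log s)⁻¹ := by
  have hne : ∀ᶠ s in atTop, s * log s ≠ 0 := by
    filter_upwards [eventually_gt_atTop 1] with s hs
    exact (mul_pos (by linarith) (log_pos hs)).ne'
  refine (isLittleO_iff_tendsto' (hne.mono fun s hs h0 => absurd h0 (inv_ne_zero hs))).2 ?_
  rw [← sub_self f]
  refine (hlim.sub_const f).congr' (hne.mono fun s hs => ?_)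
  dsimp only
  rw [div_inv_eq_mul, sub_mul, mul_assoc f, inv_mul_cancel₀ hs, mul_one, mul_comm]

theorem statement7_general (p : ℝ → ℝ) (f : ℝ)
    (hmeas : Measurable p) (hpos : ∀ s, 0 ≤ p s)
    (hloc : ∀ K : ℝ, 0 < K → ∃ C : ℝ, ∀ s ∈ Set.Icc (0 : ℝ) K, p s ≤ C)
    (hlim : Filter.Tendsto (fun s : ℝ => s * Real.log s * p s) Filter.atTop (nhds f)) :
    Filter.Tendsto
      (fun N : ℝ =>
        (1 / Real.log (Real.log N)) * ∫ s in Set.Ioi (0 : ℝ), Real.exp (-s / N) * p s)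
      Filter.atTop (nhds f) := by
  set g : ℝ → ℝ := fun s => (s * log s)⁻¹
  set J : ℝ → ℝ := fun N => ∫ s in Ioi 2, exp (-s / N) * g s
  have hJL : J ~[atTop] fun N => log (log N) :=
    setIntegral_exp_mul_inv_mul_log_isEquivalent one_lt_two
  have hJ : Tendsto J atTop atTop := hJL.symm.tendsto_atTop tendsto_log_log_atTop
  have hg : ∀ s ∈ Ioi (2 : ℝ), 0 ≤ g s := fun s hs =>
    inv_nonneg.2 (mul_nonneg (by linarith [mem_Ioi.1 hs]) (log_nonneg (by linarith [mem_Ioi.1 hs])))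
  have hpi : ∀ b, IntegrableOn p (Ioc 0 b) := fun b => by
    obtain ⟨C, hC⟩ := hloc (max b 1) (by positivity)
    refine Measure.integrableOn_of_bounded (M := C) measure_Ioc_lt_top.ne
      hmeas.aestronglyMeasurable (ae_restrict_of_forall_mem measurableSet_Ioc fun s hs => ?_)
    rw [norm_of_nonneg (hpos s)]
    exact hC s ⟨hs.1.le, hs.2.trans (le_max_left _ _)⟩
  have hrem := isLittleO_setIntegral_exp_mul_sub le_rfl zero_le_two hg
    (fun N => integrableOn_exp_mul_inv_mul_log one_lt_two) hJ hmeas (by fun_prop) hpi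
    (integrableOn_inv_mul_log one_lt_two) (isLittleO_sub_mul_inv_mul_log hlim)
  refine (tendsto_div_of_isLittleO_sub_mul hJL
    (tendsto_log_log_atTop.eventually_ne_atTop 0) hrem).congr fun N => ?_
  rw [one_div_mul_eq_div]

/-- if `p ≥ 0` is measurable, bounded on compact sets and
`s·(log s)·p s → f > 0` as `s → ∞`, then
`(1/log(log N))·∫_0^∞ e^{-s/N}·p s ds → f` as `N → ∞`. -/
theorem statement7 (p : ℝ → ℝ) (f : ℝ) (hf : 0 < f)
    (hmeas : Measurable p) (hpos : ∀ s, 0 ≤ p s)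
    (hloc : ∀ K : ℝ, 0 < K → ∃ C : ℝ, ∀ s ∈ Set.Icc (0 : ℝ) K, p s ≤ C)
    (hlim : Filter.Tendsto (fun s : ℝ => s * Real.log s * p s) Filter.atTop (nhds f)) :
    Filter.Tendsto
      (fun N : ℝ =>
        (1 / Real.log (Real.log N)) * ∫ s in Set.Ioi (0 : ℝ), Real.exp (-s / N) * p s)
      Filter.atTop (nhds f) :=
  statement7_general p f hmeas hpos hloc hlim
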